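/- arXiv:1809.08329 — 3 statements merged into one kernel-verified Lean document; each statement's English description precedes it below -/
import Mathlib

section
/- Let $Q \subseteq E$ be a closed convex subset of a finite-dimensional normed space, $d$ a 1-strongly convex differentiable d.g.f. on $Q$ with Bregman divergence $V$, and $f : Q \to \mathbb{R}$ a convex subdifferentiable function. Let $h > 0$, $y \in Q$, and $z = \arg\min_{u \in Q}\{\langle h \nabla f(y), u \rangle + V(y, u)\}$. Then for every $x \in Q$: $h \langle \nabla f(y), y - x \rangle \leq \frac{h^2}{2}\|\nabla f(y)\|_*^2 + V(y, x) - V(z, x)$. -/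
/-!
The minimality of `z` gives, by the first-order condition on the convex set `Q` and the
three-point identity for Bregman divergences, `h ⟨p, z - x⟩ ≤ V(y,x) - V(z,x) - V(y,z)`.
Strong monotonicity of `D` makes `V(y,z) ≥ ½‖z - y‖²`, and this term absorbs the remaining
`h ⟨p, y - z⟩ ≤ |h| ‖p‖ ‖y - z‖` by AM-GM.
-/

open Set

section MirrorStep

variable {E : Type*} [NormedAddCommGroup E] [NormedSpace ℝ E]

def bregmanDiv (d : E → ℝ) (D : E → E →L[ℝ] ℝ) (u v : E) : ℝ :=
  d v - d u - D u (v - u)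

theorem mul_apply_le_half_sq_add_half_sq (p : E →L[ℝ] ℝ) (h : ℝ) (w : E) :
    h * p w ≤ h ^ 2 / 2 * ‖p‖ ^ 2 + ‖w‖ ^ 2 / 2 := by
  have hCS : h * p w ≤ |h| * ‖p‖ * ‖w‖ := by
    rw [← smul_eq_mul, ← map_smul, mul_comm |h|, mul_assoc, ← Real.norm_eq_abs, ← norm_smul]
    exact (le_abs_self _).trans (p.le_opNorm _)
  have hAMGM := two_mul_le_add_sq (|h| * ‖p‖) ‖w‖
  rw [mul_pow, sq_abs] at hAMGM
  linarith

theorem bregmanDiv_three_point (d : E → ℝ) (D : E → E →L[ℝ] ℝ) (x y z : E) :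
    bregmanDiv d D y x - bregmanDiv d D z x - bregmanDiv d D y z = (D z - D y) (x - z) := by
  simp only [bregmanDiv, sub_apply, map_sub]
  ring

variable {d : E → ℝ} {D : E → E →L[ℝ] ℝ}

theorem hasFDerivAt_bregmanDiv_right {u w : E} (hd : HasFDerivAt d (D w) w) :
    HasFDerivAt (bregmanDiv d D u) (D w - D u) w := by
  have hlin : HasFDerivAt (fun v => D u (v - u)) (D u) w := by
    simpa only [map_sub] using (D u).hasFDerivAt.sub_const (D u u)
  exact (hd.sub_const (d u)).sub hlin

/-- Strong monotonicity of `D` makes `g` below nondecreasing on `[0, 1]`; compare `g 0` with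
`g 1`. -/
theorem half_sq_norm_le_bregmanDiv {Q : Set E} (hQ : Convex ℝ Q)
    (hdiff : ∀ w ∈ Q, HasFDerivAt d (D w) w)
    (hstr : ∀ u ∈ Q, ∀ v ∈ Q, ‖u - v‖ ^ 2 ≤ (D u - D v) (u - v))
    {u v : E} (hu : u ∈ Q) (hv : v ∈ Q) :
    ‖v - u‖ ^ 2 / 2 ≤ bregmanDiv d D u v := by
  set c : ℝ → E := fun t => u + t • (v - u)
  set g : ℝ → ℝ := fun t => d (c t) - t * D u (v - u) - t ^ 2 / 2 * ‖v - u‖ ^ 2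
  set g' : ℝ → ℝ := fun t => (D (c t) - D u) (v - u) - t * ‖v - u‖ ^ 2
  have hcQ : ∀ t ∈ Icc (0 : ℝ) 1, c t ∈ Q := fun t ht => hQ.add_smul_sub_mem hu hv ht
  have hg : ∀ t ∈ Icc (0 : ℝ) 1, HasDerivAt g (g' t) t := by
    intro t ht
    have hc : HasDerivAt c (v - u) t := by
      simpa only [id, one_smul] using ((hasDerivAt_id t).smul_const (v - u)).const_add u
    have hsq : HasDerivAt (fun t : ℝ => t ^ 2 / 2 * ‖v - u‖ ^ 2) (t * ‖v - u‖ ^ 2) t :=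
      (((hasDerivAt_pow 2 t).div_const 2).mul_const _).congr_deriv (by norm_num)
    have := (((hdiff (c t) (hcQ t ht)).comp_hasDerivAt t hc).sub
      ((hasDerivAt_id t).mul_const (D u (v - u)))).sub hsq
    exact this.congr_deriv (by simp only [g', sub_apply, one_mul])
  have hg'_nonneg : ∀ t ∈ Ioo (0 : ℝ) 1, 0 ≤ g' t := by
    intro t ht
    have key := hstr (c t) (hcQ t (Ioo_subset_Icc_self ht)) u hu
    simp only [c, add_sub_cancel_left, map_smul, norm_smul, smul_eq_mul, Real.norm_eq_abs,
      abs_of_pos ht.1, mul_pow] at key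
    have : t * (t * ‖v - u‖ ^ 2) ≤ t * (D (c t) - D u) (v - u) := by linarith
    have := le_of_mul_le_mul_left this ht.1
    simp only [g']
    linarith
  have hmono : MonotoneOn g (Icc 0 1) := by
    refine monotoneOn_of_hasDerivWithinAt_nonneg (convex_Icc 0 1)
      (fun t ht => (hg t ht).continuousAt.continuousWithinAt) (f' := g') ?_ ?_
    · intro t ht
      rw [interior_Icc] at ht ⊢
      exact (hg t (Ioo_subset_Icc_self ht)).hasDerivWithinAt
    · simpa only [interior_Icc] using hg'_nonneg
  have := hmono (left_mem_Icc.mpr zero_le_one) (right_mem_Icc.mpr zero_le_one) zero_le_one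
  simp only [g, c, zero_smul, one_smul, add_zero, add_sub_cancel] at this
  simp only [bregmanDiv]
  linarith

theorem mul_apply_sub_le_of_isMinOn_bregmanDiv {Q : Set E} (hQ : Convex ℝ Q)
    (p : E →L[ℝ] ℝ) (h : ℝ) {x y z : E} (hx : x ∈ Q) (hzQ : z ∈ Q) (hd : HasFDerivAt d (D z) z)
    (hmin : IsMinOn (fun u => h * p u + bregmanDiv d D y u) Q z) :
    h * p (z - x) ≤ bregmanDiv d D y x - bregmanDiv d D z x - bregmanDiv d D y z := by
  have hderiv := (p.hasFDerivAt.const_mul h).add (hasFDerivAt_bregmanDiv_right (u := y) hd)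
  have hopt := hmin.localize.hasFDerivWithinAt_nonneg hderiv.hasFDerivWithinAt
    (sub_mem_posTangentConeAt_of_segment_subset (hQ.segment_subset hzQ hx))
  rw [bregmanDiv_three_point]
  simp only [add_apply, smul_apply, smul_eq_mul, map_sub] at hopt ⊢
  linarith

end MirrorStep

theorem mirror_descent_lemma_general {E : Type*} [NormedAddCommGroup E] [NormedSpace ℝ E]
    (Q : Set E) (hQ : Convex ℝ Q)
    (d : E → ℝ) (D : E → E →L[ℝ] ℝ)
    (hdiff : ∀ w ∈ Q, HasFDerivAt d (D w) w)
    (hstr : ∀ u ∈ Q, ∀ v ∈ Q, ‖u - v‖^2 ≤ (D u - D v) (u - v))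
    (V : E → E → ℝ) (hV : ∀ u v, V u v = d v - d u - D u (v - u))
    (y : E) (hy : y ∈ Q)
    (p : E →L[ℝ] ℝ)
    (h : ℝ)
    (z : E) (hzQ : z ∈ Q)
    (hz : ∀ u ∈ Q, h * p z + V y z ≤ h * p u + V y u) :
    ∀ x ∈ Q, h * p (y - x) ≤ h^2 / 2 * ‖p‖^2 + V y x - V z x := by
  obtain rfl : V = bregmanDiv d D := funext₂ hV
  intro x hx
  have hstep := mul_apply_sub_le_of_isMinOn_bregmanDiv hQ p h hx hzQ (hdiff z hzQ) hz
  have hyz := half_sq_norm_le_bregmanDiv hQ hdiff hstr hy hzQ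
  have hyoung := mul_apply_le_half_sq_add_half_sq p h (y - z)
  rw [norm_sub_rev] at hyoung
  have hsplit : h * p (y - x) = h * p (y - z) + h * p (z - x) := by
    rw [← mul_add, ← map_add, sub_add_sub_cancel]
  linarith

theorem mirror_descent_lemma {E : Type*} [NormedAddCommGroup E] [NormedSpace ℝ E]
    [FiniteDimensional ℝ E]
    (Q : Set E) (hQc : IsClosed Q) (hQ : Convex ℝ Q)
    (d : E → ℝ) (D : E → E →L[ℝ] ℝ)
    (hdiff : ∀ w ∈ Q, HasFDerivAt d (D w) w)
    (hstr : ∀ u ∈ Q, ∀ v ∈ Q, ‖u - v‖^2 ≤ (D u - D v) (u - v))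
    (V : E → E → ℝ) (hV : ∀ u v, V u v = d v - d u - D u (v - u))
    (f : E → ℝ) (hf : ConvexOn ℝ Q f)
    (y : E) (hy : y ∈ Q)
    (p : E →L[ℝ] ℝ) (hp : ∀ u ∈ Q, f y + p (u - y) ≤ f u)
    (h : ℝ) (hh : 0 < h)
    (z : E) (hzQ : z ∈ Q)
    (hz : ∀ u ∈ Q, h * p z + V y z ≤ h * p u + V y u) :
    ∀ x ∈ Q, h * p (y - x) ≤ h^2 / 2 * ‖p‖^2 + V y x - V z x :=
  mirror_descent_lemma_general Q hQ d D hdiff hstr V hV y hy p h z hzQ hz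
end

section
/- Let $f_1, \dots, f_N$ and $g$ be convex functions on a closed convex set $Q$, each Lipschitz with constant $M$, let $x_* \in Q$ with $g(x_*) \leq 0$, let $\varepsilon > 0$, $h = \varepsilon / M^2$, and $V$ the Bregman divergence of a 1-strongly convex d.g.f. with $V(x^0, x_*) \leq \Theta_0^2$. Suppose a sequence $(x^k)_{k=0}^{N+N_J}$ is generated by steps $x^{k+1} = \mathrm{Mirr}_{x^k}(h \nabla f_{i(k)}(x^k))$ on $N$ productive steps (where $g(x^k) \leq \varepsilon$, indexed by $i(k) \in \{1,\dots,N\}$ bijectively) and $x^{k+1} = \mathrm{Mirr}_{x^k}(h \nabla g(x^k))$ on $N_J$ non-productive steps (where $g(x^k) > \varepsilon$). Then $\sum_{k \text{ productive}} (f_{i(k)}(x^k) - f_{i(k)}(x_*)) \leq \frac{\varepsilon N}{2} + \frac{M^2 \Theta_0^2}{\varepsilon} - \frac{\varepsilon N_J}{2}$. -/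
/-!
A single mirror step `b = argmin_{u ∈ Q} (p u + V(a, u))` satisfies
`p (a - w) ≤ ‖p‖² / 2 + V(a, w) - V(b, w)` for every `w ∈ Q`: first-order optimality and the
three-point identity of the Bregman divergence bound `p (b - w)`, and the 1-strong convexity
bound `V(a, b) ≥ ‖a - b‖² / 2` absorbs `p (a - b) ≤ ‖p‖ ‖a - b‖`. With `p = h • q k` the
divergences telescope along the trajectory. By the subgradient inequality each productive term
`h q k (x k - x_*)` dominates `h (f (x k) - f x_*)`, and each non-productive one dominates
`h (g (x k) - g x_*) > h ε`; the choice `h = ε / M²` turns the result into the stated bound.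
-/

open Set Finset

section Bregman

variable {E : Type*} [NormedAddCommGroup E] [NormedSpace ℝ E]

def bregman (d : E → ℝ) (D : E → E →L[ℝ] ℝ) (u v : E) : ℝ := d v - d u - D u (v - u)

variable {d : E → ℝ} {D : E → E →L[ℝ] ℝ} {Q : Set E}

theorem bregman_three_point (a b w : E) :
    (D b - D a) (w - b) = bregman d D a w - bregman d D a b - bregman d D b w := by
  have hsplit : D a (w - a) = D a (w - b) + D a (b - a) := by
    rw [← map_add, sub_add_sub_cancel]
  simp only [bregman, sub_apply]
  linarith

theorem sq_norm_div_two_le_bregman (hQ : Convex ℝ Q)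
    (hdiff : ∀ w ∈ Q, HasFDerivAt d (D w) w)
    (hstr : ∀ u ∈ Q, ∀ v ∈ Q, ‖u - v‖ ^ 2 ≤ (D u - D v) (u - v))
    {u v : E} (hu : u ∈ Q) (hv : v ∈ Q) : ‖v - u‖ ^ 2 / 2 ≤ bregman d D u v := by
  set γ : ℝ → E := fun t => u + t • (v - u)
  have hγQ : ∀ t ∈ Icc (0 : ℝ) 1, γ t ∈ Q := fun t ht => hQ.add_smul_sub_mem hu hv ht
  set φ : ℝ → ℝ := fun t => d (γ t) - t * D u (v - u) - t ^ 2 / 2 * ‖v - u‖ ^ 2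
  have hφ : ∀ t ∈ Icc (0 : ℝ) 1,
      HasDerivAt φ ((D (γ t) - D u) (v - u) - t * ‖v - u‖ ^ 2) t := by
    intro t ht
    have hγ : HasDerivAt γ (v - u) t := by
      simpa [γ] using ((hasDerivAt_id t).smul_const (v - u)).const_add u
    have hquad : HasDerivAt (fun t : ℝ => t ^ 2 / 2 * ‖v - u‖ ^ 2) (t * ‖v - u‖ ^ 2) t :=
      (((hasDerivAt_pow 2 t).div_const 2).mul_const (‖v - u‖ ^ 2)).congr_deriv (by ring)
    exact ((((hdiff _ (hγQ t ht)).comp_hasDerivAt t hγ).sub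
      ((hasDerivAt_id t).mul_const (D u (v - u)))).sub hquad).congr_deriv (by simp)
  have hφ_nonneg : ∀ t ∈ interior (Icc (0 : ℝ) 1),
      0 ≤ (D (γ t) - D u) (v - u) - t * ‖v - u‖ ^ 2 := by
    intro t ht
    rw [interior_Icc] at ht
    have hγt := hstr (γ t) (hγQ t (Ioo_subset_Icc_self ht)) u hu
    simp only [γ, add_sub_cancel_left, norm_smul, mul_pow, Real.norm_eq_abs, sq_abs,
      map_smul, smul_eq_mul] at hγt
    nlinarith [ht.1]
  have hmono : MonotoneOn φ (Icc 0 1) :=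
    monotoneOn_of_hasDerivWithinAt_nonneg (convex_Icc 0 1)
      (fun t ht => (hφ t ht).continuousAt.continuousWithinAt)
      (fun t ht => (hφ t (interior_subset ht)).hasDerivWithinAt) hφ_nonneg
  have h01 := hmono (left_mem_Icc.2 zero_le_one) (right_mem_Icc.2 zero_le_one) zero_le_one
  simp only [φ, γ, zero_smul, one_smul, add_zero, add_sub_cancel] at h01
  simp only [bregman]
  linarith

theorem bregman_nonneg (hQ : Convex ℝ Q)
    (hdiff : ∀ w ∈ Q, HasFDerivAt d (D w) w)
    (hstr : ∀ u ∈ Q, ∀ v ∈ Q, ‖u - v‖ ^ 2 ≤ (D u - D v) (u - v))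
    {u v : E} (hu : u ∈ Q) (hv : v ∈ Q) : 0 ≤ bregman d D u v :=
  (by positivity : (0 : ℝ) ≤ ‖v - u‖ ^ 2 / 2).trans (sq_norm_div_two_le_bregman hQ hdiff hstr hu hv)

theorem apply_sub_le_of_isMinOn_bregman (hQ : Convex ℝ Q)
    (hdiff : ∀ w ∈ Q, HasFDerivAt d (D w) w) (p : E →L[ℝ] ℝ) {a b w : E}
    (hb : b ∈ Q) (hw : w ∈ Q) (hmin : IsMinOn (fun u => p u + bregman d D a u) Q b) :
    p (b - w) ≤ (D b - D a) (w - b) := by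
  have hderiv : HasFDerivAt (fun u => p u + bregman d D a u) (p + (D b - D a)) b :=
    p.hasFDerivAt.add (((hdiff b hb).sub_const (d a)).sub
      ((D a).hasFDerivAt.comp b ((hasFDerivAt_id b).sub_const a)))
  have hfoc := hmin.localize.hasFDerivWithinAt_nonneg hderiv.hasFDerivWithinAt
    (sub_mem_posTangentConeAt_of_segment_subset (hQ.segment_subset hb hw))
  rw [← neg_sub w b, map_neg]
  simp only [add_apply] at hfoc
  linarith

theorem mirror_step_le (hQ : Convex ℝ Q)
    (hdiff : ∀ w ∈ Q, HasFDerivAt d (D w) w)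
    (hstr : ∀ u ∈ Q, ∀ v ∈ Q, ‖u - v‖ ^ 2 ≤ (D u - D v) (u - v))
    (p : E →L[ℝ] ℝ) {L : ℝ} (hp : ‖p‖ ≤ L) {a b w : E} (ha : a ∈ Q) (hb : b ∈ Q) (hw : w ∈ Q)
    (hmin : IsMinOn (fun u => p u + bregman d D a u) Q b) :
    p (a - w) ≤ L ^ 2 / 2 + bregman d D a w - bregman d D b w := by
  have hfoc := apply_sub_le_of_isMinOn_bregman hQ hdiff p hb hw hmin
  rw [bregman_three_point] at hfoc
  have hab := sq_norm_div_two_le_bregman hQ hdiff hstr ha hb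
  rw [norm_sub_rev] at hab
  have hpab : p (a - b) ≤ L * ‖a - b‖ :=
    calc p (a - b) ≤ ‖p (a - b)‖ := Real.le_norm_self _
      _ ≤ ‖p‖ * ‖a - b‖ := p.le_opNorm _
      _ ≤ L * ‖a - b‖ := by gcongr
  have hsplit : p (a - w) = p (a - b) + p (b - w) := by rw [← map_add, sub_add_sub_cancel]
  nlinarith [sq_nonneg (L - ‖a - b‖)]

theorem mirror_descent_sum_le (hQ : Convex ℝ Q)
    (hdiff : ∀ w ∈ Q, HasFDerivAt d (D w) w)
    (hstr : ∀ u ∈ Q, ∀ v ∈ Q, ‖u - v‖ ^ 2 ≤ (D u - D v) (u - v))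
    {x : ℕ → E} (hxQ : ∀ k, x k ∈ Q) {q : ℕ → E →L[ℝ] ℝ} {h M : ℝ} (hh : 0 ≤ h) {n : ℕ}
    (hq : ∀ k < n, ‖q k‖ ≤ M)
    (hstep : ∀ k < n, ∀ u ∈ Q,
      h * q k (x (k + 1)) + bregman d D (x k) (x (k + 1)) ≤ h * q k u + bregman d D (x k) u)
    {w : E} (hw : w ∈ Q) :
    h * ∑ k ∈ range n, q k (x k - w) ≤ n * (h * M) ^ 2 / 2 + bregman d D (x 0) w := by
  have hk : ∀ k ∈ range n, h * q k (x k - w) ≤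
      (h * M) ^ 2 / 2 + (bregman d D (x k) w - bregman d D (x (k + 1)) w) := by
    intro k hkn
    have hkn := mem_range.1 hkn
    have hnorm : ‖h • q k‖ ≤ h * M := by
      rw [norm_smul, Real.norm_of_nonneg hh]
      exact mul_le_mul_of_nonneg_left (hq k hkn) hh
    have := mirror_step_le hQ hdiff hstr (h • q k) hnorm (hxQ k) (hxQ (k + 1)) hw
      (fun u hu => by simpa using hstep k hkn u hu)
    simp only [smul_apply, smul_eq_mul] at this
    linarith
  calc h * ∑ k ∈ range n, q k (x k - w)
      ≤ ∑ k ∈ range n, ((h * M) ^ 2 / 2 + (bregman d D (x k) w - bregman d D (x (k + 1)) w)) := by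
        rw [mul_sum]
        exact sum_le_sum hk
    _ = n * (h * M) ^ 2 / 2 + (bregman d D (x 0) w - bregman d D (x n) w) := by
        rw [sum_add_distrib, sum_range_sub', sum_const, card_range, nsmul_eq_mul]
        ring
    _ ≤ n * (h * M) ^ 2 / 2 + bregman d D (x 0) w := by
        linarith [bregman_nonneg hQ hdiff hstr (hxQ n) hw]

end Bregman

theorem sub_le_apply_sub_of_subgradient {E : Type*} [NormedAddCommGroup E] [NormedSpace ℝ E]
    {Q : Set E} {F : E → ℝ} {q : E →L[ℝ] ℝ} {a w : E}
    (hsub : ∀ u ∈ Q, F a + q (u - a) ≤ F u) (hw : w ∈ Q) : F a - F w ≤ q (a - w) := by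
  have := hsub w hw
  rw [← neg_sub a w, map_neg] at this
  linarith

theorem sum_add_card_sdiff_mul_le {ι : Type*} [DecidableEq ι] {s t : Finset ι} (hst : s ⊆ t)
    {a c : ι → ℝ} {ε : ℝ} (ha : ∀ k ∈ s, a k ≤ c k) (hc : ∀ k ∈ t \ s, ε ≤ c k) :
    ∑ k ∈ s, a k + #(t \ s) * ε ≤ ∑ k ∈ t, c k := by
  rw [← sum_sdiff hst, ← nsmul_eq_mul]
  linarith [sum_le_sum ha, card_nsmul_le_sum _ _ _ hc]

theorem nonadaptive_online_MD_regret_general {E : Type*} [NormedAddCommGroup E] [NormedSpace ℝ E]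
    (Q : Set E) (hQ : Convex ℝ Q)
    (d : E → ℝ) (D : E → E →L[ℝ] ℝ)
    (hdiff : ∀ w ∈ Q, HasFDerivAt d (D w) w)
    (hstr : ∀ u ∈ Q, ∀ v ∈ Q, ‖u - v‖^2 ≤ (D u - D v) (u - v))
    (V : E → E → ℝ) (hV : ∀ u v, V u v = d v - d u - D u (v - u))
    (N NJ : ℕ)
    (M ε Θ : ℝ) (hM : 0 < M) (hε : 0 < ε)
    (f : Fin N → E → ℝ) (g : E → ℝ)
    (xs : E) (hxs : xs ∈ Q) (hgxs : g xs ≤ 0)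
    (x : ℕ → E) (hxQ : ∀ k, x k ∈ Q)
    (hΘ0 : V (x 0) xs ≤ Θ^2)
    (h : ℝ) (hhdef : h = ε / M^2)
    (prodSet : Finset ℕ)
    (hprod : ∀ k, k ∈ prodSet ↔ (k < N + NJ ∧ g (x k) ≤ ε))
    (hcard : prodSet.card = N)
    (idx : ℕ → Fin N)
    (q : ℕ → E →L[ℝ] ℝ)
    (hq_prod : ∀ k ∈ prodSet,
      (∀ u ∈ Q, f (idx k) (x k) + q k (u - x k) ≤ f (idx k) u) ∧ ‖q k‖ ≤ M)
    (hq_nonprod : ∀ k < N + NJ, k ∉ prodSet →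
      (∀ u ∈ Q, g (x k) + q k (u - x k) ≤ g u) ∧ ‖q k‖ ≤ M)
    (hstep : ∀ k < N + NJ, ∀ u ∈ Q,
      h * q k (x (k+1)) + V (x k) (x (k+1)) ≤ h * q k u + V (x k) u) :
    ∑ k ∈ prodSet, (f (idx k) (x k) - f (idx k) xs)
      ≤ ε * N / 2 + M^2 * Θ^2 / ε - ε * NJ / 2 := by
  obtain rfl : V = bregman d D := funext₂ hV
  have hh : 0 < h := hhdef ▸ by positivity
  have hqM : ∀ k < N + NJ, ‖q k‖ ≤ M := fun k hk => by
    by_cases hkP : k ∈ prodSet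
    exacts [(hq_prod k hkP).2, (hq_nonprod k hk hkP).2]
  have hsum := mirror_descent_sum_le hQ hdiff hstr hxQ hh.le hqM hstep hxs
  have hsub : prodSet ⊆ range (N + NJ) := fun k hk => mem_range.2 ((hprod k).1 hk).1
  have hsplit := sum_add_card_sdiff_mul_le hsub (ε := ε) (c := fun k => q k (x k - xs))
    (fun k hk => sub_le_apply_sub_of_subgradient (hq_prod k hk).1 hxs) fun k hk => by
      obtain ⟨hkn, hkP⟩ := mem_sdiff.1 hk
      have hgk : ε < g (x k) := not_le.1 fun hle => hkP ((hprod k).2 ⟨mem_range.1 hkn, hle⟩)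
      linarith [sub_le_apply_sub_of_subgradient (hq_nonprod k (mem_range.1 hkn) hkP).1 hxs]
  rw [card_sdiff_of_subset hsub, card_range, hcard, Nat.add_sub_cancel_left] at hsplit
  have hscale : h * (ε * N / 2 + M ^ 2 * Θ ^ 2 / ε - ε * NJ / 2) =
      (N + NJ : ℕ) * (h * M) ^ 2 / 2 + Θ ^ 2 - h * (NJ * ε) := by
    subst hhdef
    push_cast
    field_simp
    ring
  rw [← mul_le_mul_iff_right₀ hh, hscale]
  linarith [mul_le_mul_of_nonneg_left hsplit hh.le]

theorem nonadaptive_online_MD_regret {E : Type*} [NormedAddCommGroup E] [NormedSpace ℝ E]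
    [FiniteDimensional ℝ E]
    (Q : Set E) (hQc : IsClosed Q) (hQ : Convex ℝ Q)
    (d : E → ℝ) (D : E → E →L[ℝ] ℝ)
    (hdiff : ∀ w ∈ Q, HasFDerivAt d (D w) w)
    (hstr : ∀ u ∈ Q, ∀ v ∈ Q, ‖u - v‖^2 ≤ (D u - D v) (u - v))
    (V : E → E → ℝ) (hV : ∀ u v, V u v = d v - d u - D u (v - u))
    (N NJ : ℕ) (hN : 0 < N)
    (M ε Θ : ℝ) (hM : 0 < M) (hε : 0 < ε) (hΘ : 0 < Θ)
    (f : Fin N → E → ℝ) (g : E → ℝ)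
    (hfconv : ∀ i, ConvexOn ℝ Q (f i)) (hgconv : ConvexOn ℝ Q g)
    (hflip : ∀ i, ∀ u ∈ Q, ∀ v ∈ Q, |f i u - f i v| ≤ M * ‖u - v‖)
    (hglip : ∀ u ∈ Q, ∀ v ∈ Q, |g u - g v| ≤ M * ‖u - v‖)
    (xs : E) (hxs : xs ∈ Q) (hgxs : g xs ≤ 0)
    (x : ℕ → E) (hxQ : ∀ k, x k ∈ Q)
    (hΘ0 : V (x 0) xs ≤ Θ^2)
    (h : ℝ) (hhdef : h = ε / M^2)
    (prodSet : Finset ℕ)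
    (hprod : ∀ k, k ∈ prodSet ↔ (k < N + NJ ∧ g (x k) ≤ ε))
    (hcard : prodSet.card = N)
    (idx : ℕ → Fin N) (hidx : Set.BijOn idx ↑prodSet Set.univ)
    (q : ℕ → E →L[ℝ] ℝ)
    (hq_prod : ∀ k ∈ prodSet,
      (∀ u ∈ Q, f (idx k) (x k) + q k (u - x k) ≤ f (idx k) u) ∧ ‖q k‖ ≤ M)
    (hq_nonprod : ∀ k < N + NJ, k ∉ prodSet →
      (∀ u ∈ Q, g (x k) + q k (u - x k) ≤ g u) ∧ ‖q k‖ ≤ M)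
    (hstep : ∀ k < N + NJ, ∀ u ∈ Q,
      h * q k (x (k+1)) + V (x k) (x (k+1)) ≤ h * q k u + V (x k) u) :
    ∑ k ∈ prodSet, (f (idx k) (x k) - f (idx k) xs)
      ≤ ε * N / 2 + M^2 * Θ^2 / ε - ε * NJ / 2 :=
  nonadaptive_online_MD_regret_general Q hQ d D hdiff hstr V hV N NJ M ε Θ hM hε f g xs hxs hgxs x
    hxQ hΘ0 h hhdef prodSet hprod hcard idx q hq_prod hq_nonprod hstep
end

section
/- For $1 < p \leq 2$, the function $d(x) = \frac{1}{2(p-1)} \|x\|_p^2$ is 1-strongly convex on $\mathbb{R}^n$ with respect to the $\ell_p$-norm. -/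
/-!
The heart of the matter is the 2-uniform convexity of `ℓ_p` for `1 ≤ p ≤ 2` (Ball–Carlen–Lieb):
`‖x‖² + (p - 1) ‖y‖² ≤ (‖x + y‖² + ‖x - y‖²) / 2`.
Coordinatewise it is the two-point inequality
`(s² + (p - 1) t²) ^ (p / 2) ≤ (|s + t| ^ p + |s - t| ^ p) / 2`, which by homogeneity reduces to
`0 ≤ t ≤ s = 1` and then follows from Bernoulli's inequality and two monotonicity arguments.
The coordinates are reassembled by Minkowski's inequality in `ℓ^(2/p)(ℝ²)` and the concavity of
`u ↦ u ^ (p / 2)`. With `x`, `y` the midpoint and half-difference of two points, the inequality is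
midpoint 1-strong convexity of `‖·‖² / (2 (p - 1))`, and a continuous midpoint strongly convex
function is strongly convex by dyadic approximation.
-/

open scoped NNReal ENNReal
open Real Set Finset Filter Topology

section MidpointConcave

variable {θ : ℝ → ℝ}

lemma nonneg_dyadic_of_midpoint_concave (h₀ : 0 ≤ θ 0) (h₁ : 0 ≤ θ 1)
    (hmid : ∀ s t, (θ s + θ t) / 2 ≤ θ ((s + t) / 2)) (m : ℕ) :
    ∀ k : ℕ, k ≤ 2 ^ m → 0 ≤ θ (k / 2 ^ m) := by
  induction m with
  | zero =>
    intro k hk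
    interval_cases k <;> simpa
  | succ m ih =>
    intro k hk
    have hk' : (k : ℝ) / 2 ^ (m + 1) = ((k / 2 : ℕ) / 2 ^ m + (k - k / 2 : ℕ) / 2 ^ m) / 2 := by
      rw [Nat.cast_sub (Nat.div_le_self k 2)]; ring
    rw [hk']
    refine le_trans ?_ (hmid _ _)
    have := ih (k / 2) (by omega)
    have := ih (k - k / 2) (by rw [pow_succ] at hk; omega)
    linarith

lemma nonneg_of_midpoint_concave (hθ : Continuous θ) (h₀ : 0 ≤ θ 0) (h₁ : 0 ≤ θ 1)
    (hmid : ∀ s t, (θ s + θ t) / 2 ≤ θ ((s + t) / 2)) {c : ℝ} (hc : c ∈ Icc (0 : ℝ) 1) :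
    0 ≤ θ c := by
  have hlim : Tendsto (fun m : ℕ ↦ (⌊c * 2 ^ m⌋₊ : ℝ) / 2 ^ m) atTop (𝓝 c) :=
    (tendsto_nat_floor_mul_div_atTop hc.1).comp (tendsto_pow_atTop_atTop_of_one_lt one_lt_two)
  refine (isClosed_le continuous_const hθ).mem_of_tendsto hlim (Eventually.of_forall fun m ↦ ?_)
  refine nonneg_dyadic_of_midpoint_concave h₀ h₁ hmid m _ (Nat.floor_le_of_le ?_)
  push_cast
  exact mul_le_of_le_one_left (by positivity) hc.2

end MidpointConcave

theorem strongConvexOn_univ_of_midpoint {E : Type*} [NormedAddCommGroup E] [NormedSpace ℝ E]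
    {f : E → ℝ} {m : ℝ} (hf : Continuous f)
    (hmid : ∀ x y, f x + m / 2 * ‖y‖ ^ 2 ≤ (f (x + y) + f (x - y)) / 2) :
    StrongConvexOn univ m f := by
  refine ⟨convex_univ, fun x _ y _ a b ha hb hab ↦ ?_⟩
  let θ : ℝ → ℝ := fun c ↦
    (1 - c) * f x + c * f y - c * (1 - c) * (m / 2 * ‖x - y‖ ^ 2) - f ((1 - c) • x + c • y)
  have hmidθ (s t : ℝ) : (θ s + θ t) / 2 ≤ θ ((s + t) / 2) := by
    have h := hmid ((1 - (s + t) / 2) • x + ((s + t) / 2) • y) (((t - s) / 2) • (y - x))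
    have e₁ : (1 - (s + t) / 2) • x + ((s + t) / 2) • y + ((t - s) / 2) • (y - x) =
        (1 - t) • x + t • y := by module
    have e₂ : (1 - (s + t) / 2) • x + ((s + t) / 2) • y - ((t - s) / 2) • (y - x) =
        (1 - s) • x + s • y := by module
    have hn : ‖((t - s) / 2) • (y - x)‖ ^ 2 = ((t - s) / 2) ^ 2 * ‖x - y‖ ^ 2 := by
      rw [norm_smul, mul_pow, norm_sub_rev, Real.norm_eq_abs, sq_abs]
    rw [e₁, e₂, hn] at h
    simp only [θ]
    linear_combination h
  have hθ := nonneg_of_midpoint_concave (θ := θ) (by fun_prop) (by simp [θ]) (by simp [θ])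
    hmidθ ⟨hb, by linarith⟩
  obtain rfl : a = 1 - b := by linarith
  simp only [θ, smul_eq_mul] at hθ ⊢
  linarith

section TwoPoint

variable {p : ℝ}

lemma two_le_one_add_rpow_add_one_sub_rpow {e s : ℝ} (he : e ≤ 0) (hs : |s| < 1) :
    2 ≤ (1 + s) ^ e + (1 - s) ^ e := by
  obtain ⟨hs₁, hs₂⟩ := abs_lt.1 hs
  have hplus : 0 < 1 + s := by linarith
  have hminus : 0 < 1 - s := by linarith
  have hsq {u : ℝ} (hu : 0 < u) : u ^ e = (u ^ (e / 2)) ^ 2 := by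
    rw [← rpow_natCast, ← rpow_mul hu.le]; norm_num
  have hprod : 1 ≤ (1 + s) ^ (e / 2) * (1 - s) ^ (e / 2) := by
    rw [← mul_rpow hplus.le hminus.le]
    exact one_le_rpow_of_pos_of_le_one_of_nonpos (by positivity) (by nlinarith [sq_nonneg s])
      (by linarith)
  rw [hsq hplus, hsq hminus]
  nlinarith [two_mul_le_add_sq ((1 + s) ^ (e / 2)) ((1 - s) ^ (e / 2))]

lemma two_mul_sub_one_mul_le_rpow_sub_rpow (hp₁ : 1 ≤ p) (hp₂ : p ≤ 2) {t : ℝ}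
    (ht : t ∈ Icc (0 : ℝ) 1) :
    2 * (p - 1) * t ≤ (1 + t) ^ (p - 1) - (1 - t) ^ (p - 1) := by
  have hmono : MonotoneOn (fun s ↦ (1 + s) ^ (p - 1) - (1 - s) ^ (p - 1) - 2 * (p - 1) * s)
      (Icc 0 1) := by
    refine monotoneOn_of_hasDerivWithinAt_nonneg (convex_Icc 0 1)
      (f' := fun s ↦ (p - 1) * ((1 + s) ^ (p - 2) + (1 - s) ^ (p - 2) - 2)) ?_ ?_ ?_
    · exact Continuous.continuousOn (by fun_prop (disch := linarith))
    · rw [interior_Icc]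
      rintro s ⟨hs₀, hs₁⟩
      have hplus : 1 + s ≠ 0 := by linarith
      have hminus : 1 - s ≠ 0 := by linarith
      refine HasDerivAt.hasDerivWithinAt ?_
      refine ((((hasDerivAt_id' s).const_add 1).rpow_const (p := p - 1) (Or.inl hplus)).sub
        (((hasDerivAt_id' s).const_sub 1).rpow_const (p := p - 1) (Or.inl hminus))).sub
        ((hasDerivAt_id' s).const_mul (2 * (p - 1))) |>.congr_deriv ?_
      rw [show p - 1 - 1 = p - 2 by ring]
      ring
    · rw [interior_Icc]
      rintro s ⟨hs₀, hs₁⟩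
      have := two_le_one_add_rpow_add_one_sub_rpow (by linarith : p - 2 ≤ 0)
        (abs_lt.2 ⟨by linarith, hs₁⟩)
      exact mul_nonneg (by linarith) (by linarith)
  simpa using hmono ⟨le_rfl, zero_le_one⟩ ht ht.1

lemma two_add_mul_sq_le_rpow_add_rpow (hp₁ : 1 ≤ p) (hp₂ : p ≤ 2) {t : ℝ}
    (ht : t ∈ Icc (0 : ℝ) 1) :
    2 + p * (p - 1) * t ^ 2 ≤ (1 + t) ^ p + (1 - t) ^ p := by
  have hmono : MonotoneOn (fun s ↦ (1 + s) ^ p + (1 - s) ^ p - p * (p - 1) * s ^ 2)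
      (Icc 0 1) := by
    refine monotoneOn_of_hasDerivWithinAt_nonneg (convex_Icc 0 1)
      (f' := fun s ↦ p * ((1 + s) ^ (p - 1) - (1 - s) ^ (p - 1) - 2 * (p - 1) * s)) ?_ ?_ ?_
    · exact Continuous.continuousOn (by fun_prop (disch := linarith))
    · rw [interior_Icc]
      rintro s ⟨hs₀, hs₁⟩
      have hplus : 1 + s ≠ 0 := by linarith
      have hminus : 1 - s ≠ 0 := by linarith
      refine HasDerivAt.hasDerivWithinAt ?_
      refine ((((hasDerivAt_id' s).const_add 1).rpow_const (p := p) (Or.inl hplus)).add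
        (((hasDerivAt_id' s).const_sub 1).rpow_const (p := p) (Or.inl hminus))).sub
        ((hasDerivAt_pow 2 s).const_mul (p * (p - 1))) |>.congr_deriv ?_
      push_cast
      ring
    · rw [interior_Icc]
      rintro s ⟨hs₀, hs₁⟩
      exact mul_nonneg (by linarith)
        (by linarith [two_mul_sub_one_mul_le_rpow_sub_rpow hp₁ hp₂ ⟨hs₀.le, hs₁.le⟩])
  have := hmono ⟨le_rfl, zero_le_one⟩ ht ht.1
  norm_num at this
  linarith

lemma one_add_mul_sq_rpow_le (hp₁ : 1 ≤ p) (hp₂ : p ≤ 2) {t : ℝ} (ht : t ∈ Icc (0 : ℝ) 1) :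
    (1 + (p - 1) * t ^ 2) ^ (p / 2) ≤ ((1 + t) ^ p + (1 - t) ^ p) / 2 := by
  have := rpow_one_add_le_one_add_mul_self (s := (p - 1) * t ^ 2) (by nlinarith)
    (by linarith : 0 ≤ p / 2) (by linarith)
  linarith [two_add_mul_sq_le_rpow_add_rpow hp₁ hp₂ ht]

lemma sq_add_mul_sq_rpow_le_of_le (hp₁ : 1 ≤ p) (hp₂ : p ≤ 2) {s t : ℝ} (ht : 0 ≤ t)
    (hts : t ≤ s) :
    (s ^ 2 + (p - 1) * t ^ 2) ^ (p / 2) ≤ ((s + t) ^ p + (s - t) ^ p) / 2 := by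
  obtain rfl | hs := (ht.trans hts).eq_or_lt
  · obtain rfl : t = 0 := le_antisymm hts ht
    simp [zero_rpow (by positivity : p / 2 ≠ 0), zero_rpow (by positivity : p ≠ 0)]
  set r := t / s
  have hr : r ∈ Icc (0 : ℝ) 1 := ⟨div_nonneg ht hs.le, (div_le_one hs).2 hts⟩
  have hsr : t = s * r := (mul_div_cancel₀ t hs.ne').symm
  have hs2 : (s ^ 2) ^ (p / 2) = s ^ p := by
    rw [← rpow_natCast, ← rpow_mul hs.le]; ring_nf
  calc (s ^ 2 + (p - 1) * t ^ 2) ^ (p / 2) = s ^ p * (1 + (p - 1) * r ^ 2) ^ (p / 2) := by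
        rw [hsr, ← hs2, ← mul_rpow (by positivity) (by nlinarith [hr.1])]; ring_nf
    _ ≤ s ^ p * (((1 + r) ^ p + (1 - r) ^ p) / 2) := by
        gcongr; exact one_add_mul_sq_rpow_le hp₁ hp₂ hr
    _ = ((s + t) ^ p + (s - t) ^ p) / 2 := by
        rw [hsr, mul_div_assoc', mul_add, ← mul_rpow hs.le (by linarith [hr.1]),
          ← mul_rpow hs.le (by linarith [hr.2])]
        ring_nf

lemma abs_add_rpow_add_abs_sub_rpow (s t p : ℝ) :
    |s + t| ^ p + |s - t| ^ p = (|s| + |t|) ^ p + |(|s| - |t|)| ^ p := by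
  rcases le_total 0 s with hs | hs <;> rcases le_total 0 t with ht | ht
  · rw [abs_of_nonneg hs, abs_of_nonneg ht, abs_of_nonneg (add_nonneg hs ht)]
  · rw [abs_of_nonneg hs, abs_of_nonpos ht, abs_of_nonneg (by linarith : 0 ≤ s - t),
      sub_neg_eq_add, add_comm, ← sub_eq_add_neg]
  · rw [abs_of_nonpos hs, abs_of_nonneg ht, abs_of_nonpos (by linarith : s - t ≤ 0),
      ← abs_neg (-s - t)]
    ring_nf
  · rw [abs_of_nonpos hs, abs_of_nonpos ht, abs_of_nonpos (by linarith : s + t ≤ 0),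
      ← abs_neg (-s - -t)]
    ring_nf

theorem sq_add_mul_sq_rpow_le (hp₁ : 1 ≤ p) (hp₂ : p ≤ 2) (s t : ℝ) :
    (s ^ 2 + (p - 1) * t ^ 2) ^ (p / 2) ≤ (|s + t| ^ p + |s - t| ^ p) / 2 := by
  rw [abs_add_rpow_add_abs_sub_rpow, ← sq_abs s, ← sq_abs t]
  rcases le_total |t| |s| with h | h
  · rw [abs_of_nonneg (sub_nonneg.2 h)]
    exact sq_add_mul_sq_rpow_le_of_le hp₁ hp₂ (abs_nonneg t) h
  · -- exchanging `s` and `t` on the left only enlarges it, as `|s| ≤ |t|` and `p ≤ 2`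
    rw [abs_sub_comm, abs_of_nonneg (sub_nonneg.2 h), add_comm |s|]
    refine (rpow_le_rpow (by positivity) ?_ (by positivity)).trans
      (sq_add_mul_sq_rpow_le_of_le hp₁ hp₂ (abs_nonneg s) h)
    nlinarith [mul_le_mul h h (abs_nonneg s) (abs_nonneg t)]

end TwoPoint

theorem rpow_sum_add_rpow_sum_le {ι : Type*} [Fintype ι] {r : ℝ} (hr : 1 ≤ r) {a b : ι → ℝ}
    (ha : ∀ i, 0 ≤ a i) (hb : ∀ i, 0 ≤ b i) :
    ((∑ i, a i) ^ r + (∑ i, b i) ^ r) ^ (1 / r) ≤ ∑ i, (a i ^ r + b i ^ r) ^ (1 / r) := by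
  have : Fact (1 ≤ ENNReal.ofReal r) := ⟨ENNReal.one_le_ofReal.2 hr⟩
  let v : ℝ → ℝ → PiLp (ENNReal.ofReal r) (fun _ : Fin 2 ↦ ℝ) := fun u w ↦ WithLp.toLp _ ![u, w]
  have hnorm {u w : ℝ} (hu : 0 ≤ u) (hw : 0 ≤ w) : ‖v u w‖ = (u ^ r + w ^ r) ^ (1 / r) := by
    have hr' : (ENNReal.ofReal r).toReal = r := ENNReal.toReal_ofReal (by linarith)
    rw [PiLp.norm_eq_sum (by rw [hr']; linarith), hr', Fin.sum_univ_two]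
    simp [v, abs_of_nonneg hu, abs_of_nonneg hw]
  have hsum : ∑ i, v (a i) (b i) = v (∑ i, a i) (∑ i, b i) := by
    ext j; fin_cases j <;> simp [v, WithLp.ofLp_sum]
  rw [← hnorm (sum_nonneg fun i _ ↦ ha i) (sum_nonneg fun i _ ↦ hb i), ← hsum]
  simp_rw [← hnorm (ha _) (hb _)]
  exact norm_sum_le _ _

lemma PiLp.norm_rpow_eq_sum_abs_rpow {ι : Type*} [Fintype ι] {p : ℝ≥0} (hp : 0 < p)
    (x : PiLp p (fun _ : ι ↦ ℝ)) : ‖x‖ ^ (p : ℝ) = ∑ i, |x i| ^ (p : ℝ) := by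
  rw [PiLp.norm_eq_sum (by simpa using hp), ← rpow_mul (by positivity), ENNReal.coe_toReal,
    one_div_mul_cancel (by positivity), rpow_one]
  simp only [Real.norm_eq_abs]

theorem PiLp.norm_sq_add_norm_sq_rpow_le {ι : Type*} [Fintype ι] {p : ℝ≥0}
    [Fact (1 ≤ (p : ℝ≥0∞))] (hp₂ : (p : ℝ) ≤ 2) (x z : PiLp p (fun _ : ι ↦ ℝ)) :
    (‖x‖ ^ 2 + ‖z‖ ^ 2) ^ ((p : ℝ) / 2) ≤ ∑ i, (x i ^ 2 + z i ^ 2) ^ ((p : ℝ) / 2) := by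
  have hp : (0 : ℝ) < p := by linarith [by exact_mod_cast (Fact.out : 1 ≤ (p : ℝ≥0∞))]
  have hsq {u : ℝ} (hu : 0 ≤ u) : (u ^ (p : ℝ)) ^ (2 / (p : ℝ)) = u ^ 2 := by
    rw [← rpow_mul hu, mul_div_cancel₀ _ hp.ne', rpow_two]
  have key := rpow_sum_add_rpow_sum_le (r := 2 / p) ((le_div_iff₀ hp).2 (by linarith))
    (a := fun i ↦ |x i| ^ (p : ℝ)) (b := fun i ↦ |z i| ^ (p : ℝ))
    (fun i ↦ by positivity) (fun i ↦ by positivity)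
  simp only [← PiLp.norm_rpow_eq_sum_abs_rpow (NNReal.coe_pos.1 hp), hsq (abs_nonneg _), sq_abs,
    one_div_div] at key
  rwa [hsq (norm_nonneg x), hsq (norm_nonneg z)] at key

theorem PiLp.norm_sq_add_mul_norm_sq_le {ι : Type*} [Fintype ι] {p : ℝ≥0}
    [Fact (1 ≤ (p : ℝ≥0∞))] (hp₂ : (p : ℝ) ≤ 2) (x y : PiLp p (fun _ : ι ↦ ℝ)) :
    ‖x‖ ^ 2 + ((p : ℝ) - 1) * ‖y‖ ^ 2 ≤ (‖x + y‖ ^ 2 + ‖x - y‖ ^ 2) / 2 := by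
  have hp₁ : (1 : ℝ) ≤ p := by exact_mod_cast (Fact.out : 1 ≤ (p : ℝ≥0∞))
  have hp₀ : 0 < p := by exact_mod_cast (zero_lt_one.trans_le hp₁)
  have hz : ‖(√((p : ℝ) - 1)) • y‖ ^ 2 = ((p : ℝ) - 1) * ‖y‖ ^ 2 := by
    rw [norm_smul, mul_pow, norm_of_nonneg (sqrt_nonneg _), sq_sqrt (by linarith)]
  have hconc {A B : ℝ} (hA : 0 ≤ A) (hB : 0 ≤ B) :
      (A ^ (p : ℝ) + B ^ (p : ℝ)) / 2 ≤ ((A ^ 2 + B ^ 2) / 2) ^ ((p : ℝ) / 2) := by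
    have := (concaveOn_rpow (p := (p : ℝ) / 2) (by positivity) (by linarith)).2
      (sq_nonneg A) (sq_nonneg B) (by norm_num : (0 : ℝ) ≤ 1 / 2) (by norm_num : (0 : ℝ) ≤ 1 / 2)
      (by norm_num)
    have hpow {u : ℝ} (hu : 0 ≤ u) : (u ^ 2) ^ ((p : ℝ) / 2) = u ^ (p : ℝ) := by
      rw [← rpow_natCast, ← rpow_mul hu]; ring_nf
    simp only [smul_eq_mul, hpow hA, hpow hB] at this
    rw [show 1 / 2 * A ^ 2 + 1 / 2 * B ^ 2 = (A ^ 2 + B ^ 2) / 2 by ring] at this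
    linarith
  refine (rpow_le_rpow_iff (by positivity) (by positivity) (by positivity : 0 < (p : ℝ) / 2)).1 ?_
  calc (‖x‖ ^ 2 + ((p : ℝ) - 1) * ‖y‖ ^ 2) ^ ((p : ℝ) / 2)
      = (‖x‖ ^ 2 + ‖(√((p : ℝ) - 1)) • y‖ ^ 2) ^ ((p : ℝ) / 2) := by rw [hz]
    _ ≤ ∑ i, (x i ^ 2 + ((√((p : ℝ) - 1)) • y) i ^ 2) ^ ((p : ℝ) / 2) :=
        PiLp.norm_sq_add_norm_sq_rpow_le hp₂ _ _
    _ = ∑ i, (x i ^ 2 + ((p : ℝ) - 1) * y i ^ 2) ^ ((p : ℝ) / 2) := by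
        simp only [PiLp.smul_apply, smul_eq_mul, mul_pow, sq_sqrt (by linarith : 0 ≤ (p : ℝ) - 1)]
    _ ≤ ∑ i, (|x i + y i| ^ (p : ℝ) + |x i - y i| ^ (p : ℝ)) / 2 :=
        sum_le_sum fun i _ ↦ sq_add_mul_sq_rpow_le hp₁ hp₂ (x i) (y i)
    _ = (‖x + y‖ ^ (p : ℝ) + ‖x - y‖ ^ (p : ℝ)) / 2 := by
        simp only [PiLp.norm_rpow_eq_sum_abs_rpow hp₀, PiLp.add_apply, PiLp.sub_apply,
          ← sum_add_distrib, sum_div]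
    _ ≤ ((‖x + y‖ ^ 2 + ‖x - y‖ ^ 2) / 2) ^ ((p : ℝ) / 2) :=
        hconc (norm_nonneg _) (norm_nonneg _)

theorem lp_dgf_strongly_convex (n : ℕ) (p : ℝ≥0) (hp1 : 1 < (p:ℝ)) (hp2 : (p:ℝ) ≤ 2)
    [Fact (1 ≤ (p : ℝ≥0∞))] :
    StrongConvexOn Set.univ 1
      (fun x : PiLp p (fun _ : Fin n => ℝ) => ‖x‖^2 / (2*((p:ℝ)-1))) := by
  refine strongConvexOn_univ_of_midpoint (by fun_prop) fun x y ↦ ?_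
  have hp : 0 < (p : ℝ) - 1 := by linarith
  have := PiLp.norm_sq_add_mul_norm_sq_le hp2 x y
  field_simp
  linarith
end
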